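/- arXiv:2202.09340 — 2 statements merged into one kernel-verified Lean document; each statement's English description precedes it below -/
import Mathlib

section
/- Let f : ℝ^d → ℝ be a bounded measurable function, σ > 0, and u(x) = E_{δ∼N(0,σ²I)}[f(x+δ)]. Then the control-variate form of Stein's identity holds: ∇u(x) = E_{δ∼N(0,σ²I)}[(δ/σ²) · (f(x+δ) − f(x))] for every x ∈ ℝ^d. -/
/-
Writing `u x = c * ∫ y, f y * exp (-‖y - x‖² / (2σ²))` moves all dependence on `x` into the
Gaussian kernel, whose gradient in `x` is the kernel times `(y - x) / σ²`. Differentiating under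
the integral sign, which is justified because the kernel near `x` is dominated by a Gaussian of
half the rate, gives `∇u x = E[f (x + δ) • δ / σ²]`. The Gaussian is symmetric, so `E[δ] = 0`,
and `f x • δ / σ²` may be subtracted inside the expectation.
-/

open MeasureTheory Real

/-- The Gaussian probability measure `N(0, σ²I)` on `ℝ^d`, defined via its density
with respect to the Lebesgue measure. -/
noncomputable def gaussianMeasure (d : ℕ) (σ : ℝ) :
    Measure (EuclideanSpace ℝ (Fin d)) :=
  volume.withDensity fun δ =>
    ENNReal.ofReal ((2 * π * σ ^ 2) ^ (-(d : ℝ) / 2) * Real.exp (-‖δ‖ ^ 2 / (2 * σ ^ 2)))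

open InnerProductSpace Metric

lemma mul_exp_neg_mul_sq_le_add {b : ℝ} (hb : 0 < b) (t : ℝ) :
    t * exp (-b * t ^ 2) ≤ exp (-b * t ^ 2) + 2 / b * exp (-(b / 2) * t ^ 2) := by
  have hsq : t ^ 2 ≤ 2 / b * exp (b / 2 * t ^ 2) := by
    rw [div_mul_eq_mul_div, le_div_iff₀ hb]
    nlinarith [add_one_le_exp (b / 2 * t ^ 2)]
  have hsplit : exp (-(b / 2) * t ^ 2) = exp (b / 2 * t ^ 2) * exp (-b * t ^ 2) := by
    rw [← exp_add]; ring_nf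
  rw [hsplit]
  nlinarith [exp_pos (-b * t ^ 2), sq_nonneg (t - 1)]

lemma mul_exp_neg_mul_sq_le_of_abs_sub_le {b : ℝ} (hb : 0 ≤ b) {s t : ℝ} (hs : 0 ≤ s)
    (hst : |s - t| ≤ 1) :
    s * exp (-b * s ^ 2) ≤ exp b * ((t + 1) * exp (-(b / 2) * t ^ 2)) := by
  obtain ⟨hts, hst⟩ := abs_le.1 hst
  have hexp : exp (-b * s ^ 2) ≤ exp b * exp (-(b / 2) * t ^ 2) := by
    have ht : t ^ 2 ≤ 2 * s ^ 2 + 2 := by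
      nlinarith [mul_nonneg (by linarith : 0 ≤ s + 1 - t) (by linarith : 0 ≤ s + 1 + t),
        sq_nonneg (s - 1)]
    rw [← exp_add, exp_le_exp]
    nlinarith [mul_le_mul_of_nonneg_left ht hb]
  calc s * exp (-b * s ^ 2) ≤ (t + 1) * (exp b * exp (-(b / 2) * t ^ 2)) :=
        mul_le_mul (by linarith) hexp (exp_pos _).le (by linarith)
    _ = _ := by ring

section GaussianKernel

variable {V : Type*} [NormedAddCommGroup V] [InnerProductSpace ℝ V] {b : ℝ}

lemma hasFDerivAt_exp_neg_mul_sq_norm_sub [CompleteSpace V] (y x : V) :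
    HasFDerivAt (fun x => exp (-b * ‖y - x‖ ^ 2))
      (toDual ℝ V ((2 * b * exp (-b * ‖y - x‖ ^ 2)) • (y - x))) x := by
  have h := ((((hasFDerivAt_id x).const_sub y).norm_sq).const_mul (-b)).exp
  refine h.congr_fderiv (ContinuousLinearMap.ext fun w => ?_)
  simp only [id_eq, neg_mul, map_sub, ContinuousLinearMap.comp_neg, ContinuousLinearMap.comp_id,
    neg_sub, neg_smul, smul_neg, neg_apply, smul_apply, sub_apply, coe_innerSL_apply, nsmul_eq_mul,
    Nat.cast_ofNat, smul_eq_mul, map_smul, toDual_apply_apply]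
  ring

variable [FiniteDimensional ℝ V] [MeasurableSpace V] [BorelSpace V]

lemma integrable_exp_neg_mul_sq_norm (hb : 0 < b) :
    Integrable fun v : V => exp (-b * ‖v‖ ^ 2) := by
  simpa [Complex.norm_exp, ← Complex.ofReal_pow] using
    (GaussianFourier.integrable_cexp_neg_mul_sq_norm_add (V := V) (b := b)
      (by simpa using hb) 0 0).norm

lemma integrable_norm_mul_exp_neg_mul_sq_norm (hb : 0 < b) :
    Integrable fun v : V => ‖v‖ * exp (-b * ‖v‖ ^ 2) := by
  refine ((integrable_exp_neg_mul_sq_norm hb).add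
    ((integrable_exp_neg_mul_sq_norm (half_pos hb)).const_mul (2 / b))).mono' (by fun_prop)
    (.of_forall fun v => ?_)
  rw [norm_of_nonneg (by positivity)]
  exact mul_exp_neg_mul_sq_le_add hb ‖v‖

theorem hasGradientAt_integral_mul_exp_neg_mul_sq_norm_sub {f : V → ℝ} (hf : Measurable f)
    {C : ℝ} (hC : ∀ y, |f y| ≤ C) (hb : 0 < b) (x₀ : V) :
    HasGradientAt (fun x => ∫ y, f y * exp (-b * ‖y - x‖ ^ 2))
      (∫ y, (f y * (2 * b * exp (-b * ‖y - x₀‖ ^ 2))) • (y - x₀)) x₀ := by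
  set F' : V → V → V →L[ℝ] ℝ := fun x y =>
    toDual ℝ V ((f y * (2 * b * exp (-b * ‖y - x‖ ^ 2))) • (y - x))
  have hF_meas : ∀ x, AEStronglyMeasurable (fun y => f y * exp (-b * ‖y - x‖ ^ 2)) volume :=
    fun x => (hf.mul (by fun_prop)).aestronglyMeasurable
  have hF_int : Integrable (fun y => f y * exp (-b * ‖y - x₀‖ ^ 2)) :=
    ((integrable_exp_neg_mul_sq_norm hb).comp_sub_right x₀).bdd_mul hf.aestronglyMeasurable
      (.of_forall fun y => hC y)
  have hF'_meas : AEStronglyMeasurable (F' x₀) volume :=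
    (toDual ℝ V).continuous.comp_aestronglyMeasurable
      ((hf.mul (by fun_prop)).aestronglyMeasurable.smul (by fun_prop))
  have h_bound : ∀ y, ∀ x ∈ ball x₀ 1, ‖F' x y‖ ≤
      C * (2 * b) * (exp b * ((‖y - x₀‖ + 1) * exp (-(b / 2) * ‖y - x₀‖ ^ 2))) := by
    intro y x hx
    have hkernel := mul_exp_neg_mul_sq_le_of_abs_sub_le hb.le (norm_nonneg (y - x))
      ((abs_norm_sub_norm_le _ _).trans <| by
        rw [sub_sub_sub_cancel_left, ← dist_eq_norm, dist_comm]; exact (mem_ball.1 hx).le)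
    calc ‖F' x y‖ = |f y| * (2 * b) * (‖y - x‖ * exp (-b * ‖y - x‖ ^ 2)) := by
          simp only [F', LinearIsometryEquiv.norm_map, norm_smul, norm_mul, Real.norm_eq_abs,
            abs_of_pos hb, abs_exp]
          ring
      _ ≤ C * (2 * b) * (‖y - x‖ * exp (-b * ‖y - x‖ ^ 2)) := by gcongr; exact hC y
      _ ≤ _ := by gcongr; exact mul_nonneg ((abs_nonneg _).trans (hC y)) (by positivity)
  have bound_int : Integrable fun y =>
      C * (2 * b) * (exp b * ((‖y - x₀‖ + 1) * exp (-(b / 2) * ‖y - x₀‖ ^ 2))) := by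
    have := ((integrable_norm_mul_exp_neg_mul_sq_norm (V := V) (half_pos hb)).add
      (integrable_exp_neg_mul_sq_norm (half_pos hb))).comp_sub_right x₀
    exact ((this.const_mul (exp b)).const_mul (C * (2 * b))).congr
      (.of_forall fun y => by simp only [Pi.add_apply]; ring)
  have h_diff : ∀ y, ∀ x ∈ ball x₀ 1,
      HasFDerivAt (fun x => f y * exp (-b * ‖y - x‖ ^ 2)) (F' x y) x := by
    intro y x _
    simpa [F', smul_smul] using
      (hasFDerivAt_exp_neg_mul_sq_norm_sub (b := b) y x).const_mul (f y)
  rw [hasGradientAt_iff_hasFDerivAt, ← LinearIsometryEquiv.coe_toLinearIsometry,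
    ← LinearIsometry.integral_comp_comm]
  exact hasFDerivAt_integral_of_dominated_of_fderiv_le (ball_mem_nhds x₀ one_pos)
    (.of_forall hF_meas) hF_int hF'_meas (.of_forall h_bound) bound_int (.of_forall h_diff)

end GaussianKernel

lemma integral_sub_const_smul_eq_of_integral_eq_zero {E : Type*} [NormedAddCommGroup E]
    [NormedSpace ℝ E] [MeasurableSpace E] {μ : Measure E} (hμ : Integrable (fun v => v) μ)
    (hμ₀ : ∫ v, v ∂μ = 0) {g : E → ℝ} (hg : AEStronglyMeasurable g μ) {C : ℝ}
    (hC : ∀ v, |g v| ≤ C) (a : ℝ) :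
    ∫ v, (g v - a) • v ∂μ = ∫ v, g v • v ∂μ := by
  have hgμ : Integrable (fun v => g v • v) μ := hμ.bdd_smul C hg (.of_forall hC)
  have haμ : Integrable (fun v => a • v) μ := hμ.smul a
  simp_rw [sub_smul]
  rw [integral_sub hgμ haμ, integral_smul, hμ₀, smul_zero, sub_zero]

section GaussianMeasure

variable {d : ℕ} {σ : ℝ}

noncomputable def gaussianDensity (d : ℕ) (σ : ℝ) (δ : EuclideanSpace ℝ (Fin d)) : ℝ :=
  (2 * π * σ ^ 2) ^ (-(d : ℝ) / 2) * exp (-‖δ‖ ^ 2 / (2 * σ ^ 2))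

lemma gaussianDensity_nonneg (δ : EuclideanSpace ℝ (Fin d)) : 0 ≤ gaussianDensity d σ δ := by
  unfold gaussianDensity; positivity

lemma gaussianDensity_neg (δ : EuclideanSpace ℝ (Fin d)) :
    gaussianDensity d σ (-δ) = gaussianDensity d σ δ := by
  simp [gaussianDensity]

lemma gaussianDensity_eq_mul_exp (δ : EuclideanSpace ℝ (Fin d)) :
    gaussianDensity d σ δ =
      (2 * π * σ ^ 2) ^ (-(d : ℝ) / 2) * exp (-(2 * σ ^ 2)⁻¹ * ‖δ‖ ^ 2) := by
  rw [gaussianDensity]; ring_nf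

lemma gaussianMeasure_eq_withDensity :
    gaussianMeasure d σ = volume.withDensity fun δ => ENNReal.ofReal (gaussianDensity d σ δ) :=
  rfl

lemma integral_gaussianMeasure {E : Type*} [NormedAddCommGroup E] [NormedSpace ℝ E]
    (h : EuclideanSpace ℝ (Fin d) → E) :
    ∫ δ, h δ ∂gaussianMeasure d σ = ∫ δ, gaussianDensity d σ δ • h δ := by
  rw [gaussianMeasure_eq_withDensity, integral_withDensity_eq_integral_toReal_smul
    (by unfold gaussianDensity; fun_prop) (.of_forall fun _ => ENNReal.ofReal_lt_top)]
  simp_rw [ENNReal.toReal_ofReal (gaussianDensity_nonneg _)]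

lemma integrable_gaussianMeasure_iff {E : Type*} [NormedAddCommGroup E] [NormedSpace ℝ E]
    {h : EuclideanSpace ℝ (Fin d) → E} :
    Integrable h (gaussianMeasure d σ) ↔ Integrable fun δ => gaussianDensity d σ δ • h δ := by
  rw [gaussianMeasure_eq_withDensity, integrable_withDensity_iff_integrable_smul'
    (by unfold gaussianDensity; fun_prop) (.of_forall fun _ => ENNReal.ofReal_lt_top)]
  simp_rw [ENNReal.toReal_ofReal (gaussianDensity_nonneg _)]

lemma integral_id_gaussianMeasure : ∫ δ, δ ∂gaussianMeasure d σ = 0 := by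
  have h := integral_neg_eq_self (fun δ => gaussianDensity d σ δ • δ) volume
  simp only [gaussianDensity_neg, smul_neg, integral_neg] at h
  have : IsAddTorsionFree (EuclideanSpace ℝ (Fin d)) := .of_isTorsionFree ℝ _
  rw [integral_gaussianMeasure, ← neg_eq_self, h]

lemma integrable_id_gaussianMeasure (hσ : σ ≠ 0) :
    Integrable (fun δ => δ) (gaussianMeasure d σ) := by
  rw [integrable_gaussianMeasure_iff]
  have hexp := integrable_norm_mul_exp_neg_mul_sq_norm
    (V := EuclideanSpace ℝ (Fin d)) (b := (2 * σ ^ 2)⁻¹) (by positivity)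
  refine (hexp.const_mul ((2 * π * σ ^ 2) ^ (-(d : ℝ) / 2))).mono'
    (by unfold gaussianDensity; fun_prop) (.of_forall fun δ => ?_)
  rw [norm_smul, norm_of_nonneg (gaussianDensity_nonneg δ), gaussianDensity_eq_mul_exp]
  exact le_of_eq (by ring)

theorem hasGradientAt_integral_gaussianMeasure {f : EuclideanSpace ℝ (Fin d) → ℝ}
    (hf : Measurable f) {C : ℝ} (hC : ∀ y, |f y| ≤ C) (hσ : σ ≠ 0)
    (x : EuclideanSpace ℝ (Fin d)) :
    HasGradientAt (fun x => ∫ δ, f (x + δ) ∂gaussianMeasure d σ)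
      (∫ δ, (f (x + δ) / σ ^ 2) • δ ∂gaussianMeasure d σ) x := by
  obtain ⟨c, hc⟩ : ∃ c, ∀ δ, gaussianDensity d σ δ = c * exp (-(2 * σ ^ 2)⁻¹ * ‖δ‖ ^ 2) :=
    ⟨_, gaussianDensity_eq_mul_exp⟩
  have hu : (fun x => ∫ δ, f (x + δ) ∂gaussianMeasure d σ) =
      fun x => c * ∫ y, f y * exp (-(2 * σ ^ 2)⁻¹ * ‖y - x‖ ^ 2) := by
    funext x
    rw [integral_gaussianMeasure, ← integral_const_mul, eq_comm,
      ← integral_add_left_eq_self _ x]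
    congr 1; funext δ
    rw [hc, add_sub_cancel_left, smul_eq_mul]; ring
  have hv : ∫ δ, (f (x + δ) / σ ^ 2) • δ ∂gaussianMeasure d σ =
      c • ∫ y, (f y * (2 * (2 * σ ^ 2)⁻¹ * exp (-(2 * σ ^ 2)⁻¹ * ‖y - x‖ ^ 2))) • (y - x) := by
    rw [integral_gaussianMeasure, ← integral_smul, eq_comm, ← integral_add_left_eq_self _ x]
    congr 1; funext δ
    rw [hc, add_sub_cancel_left, smul_smul, smul_smul]
    congr 1
    field_simp
  rw [hu, hv, hasGradientAt_iff_hasFDerivAt, map_smul]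
  exact (hasGradientAt_integral_mul_exp_neg_mul_sq_norm_sub hf hC (by positivity) x
    |>.hasFDerivAt.const_mul c)

end GaussianMeasure

theorem stein_first_order_control_variate_general (d : ℕ) (σ : ℝ) (hσ : 0 < σ)
    (f : EuclideanSpace ℝ (Fin d) → ℝ) (hf : Measurable f)
    (C : ℝ) (hbd : ∀ x, |f x| ≤ C)
    (u : EuclideanSpace ℝ (Fin d) → ℝ)
    (hu : ∀ x, u x = ∫ δ, f (x + δ) ∂(gaussianMeasure d σ)) :
    ∀ x, gradient u x =
      ∫ δ, ((f (x + δ) - f x) / σ ^ 2) • δ ∂(gaussianMeasure d σ) := by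
  intro x
  have hσ2 : 0 < σ ^ 2 := pow_pos hσ 2
  have hbd' : ∀ δ, |f (x + δ) / σ ^ 2| ≤ C / σ ^ 2 := fun δ => by
    rw [abs_div, abs_of_pos hσ2]
    exact div_le_div_of_nonneg_right (hbd _) hσ2.le
  rw [funext hu, (hasGradientAt_integral_gaussianMeasure hf hbd hσ.ne' x).gradient]
  simp_rw [sub_div]
  have hmeas : Measurable fun δ => f (x + δ) / σ ^ 2 :=
    (hf.comp (measurable_const_add x)).div_const _
  exact (integral_sub_const_smul_eq_of_integral_eq_zero (integrable_id_gaussianMeasure hσ.ne')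
    integral_id_gaussianMeasure hmeas.aestronglyMeasurable hbd' _).symm

theorem stein_first_order_control_variate (d : ℕ) (hd : 0 < d) (σ : ℝ) (hσ : 0 < σ)
    (f : EuclideanSpace ℝ (Fin d) → ℝ) (hf : Measurable f)
    (C : ℝ) (hbd : ∀ x, |f x| ≤ C)
    (u : EuclideanSpace ℝ (Fin d) → ℝ)
    (hu : ∀ x, u x = ∫ δ, f (x + δ) ∂(gaussianMeasure d σ)) :
    ∀ x, gradient u x =
      ∫ δ, ((f (x + δ) - f x) / σ ^ 2) • δ ∂(gaussianMeasure d σ) :=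
  stein_first_order_control_variate_general d σ hσ f hf C hbd u hu
end

section
/- Let f : ℝ^d → ℝ be L-Lipschitz with respect to the Euclidean norm, and σ > 0. Then for every x ∈ ℝ^d, the second moment of the antithetic-variable Stein gradient estimator integrand is bounded independently of σ: E_{δ∼N(0,σ²I)}[ ‖(δ/(2σ²)) · (f(x+δ) − f(x−δ))‖² ] ≤ L² d (d + 2). -/
/-!
Since `f` is `L`-Lipschitz, `|f (x + δ) - f (x - δ)| ≤ 2 L ‖δ‖`, so the integrand is at most
`(L / σ²)² ‖δ‖⁴` and it remains to compute the fourth moment `E ‖δ‖⁴ = σ⁴ d (d + 2)`.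
Integrating in polar coordinates, every radial Gaussian moment is a Gamma integral:
`E ‖δ‖ᵖ = (2σ²)^(p/2) Γ((p + d)/2) / Γ(d/2)`, and for `p = 4` the functional equation of `Γ`
gives `4σ⁴ (d/2 + 1)(d/2)`.
-/

open MeasureTheory Real

open Set Module

theorem norm_antithetic_smul_sq_le {E : Type*} [NormedAddCommGroup E] [NormedSpace ℝ E]
    {f : E → ℝ} {L : ℝ} (hf : ∀ x y, |f x - f y| ≤ L * ‖x - y‖) (c : ℝ) (x δ : E) :
    ‖((f (x + δ) - f (x - δ)) / c) • δ‖ ^ 2 ≤ (2 * L / c) ^ 2 * ‖δ‖ ^ 4 := by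
  have hsub : x + δ - (x - δ) = (2 : ℝ) • δ := by rw [two_smul]; abel
  have hdiff : |f (x + δ) - f (x - δ)| ≤ 2 * L * ‖δ‖ :=
    calc _ ≤ L * ‖x + δ - (x - δ)‖ := hf _ _
      _ = 2 * L * ‖δ‖ := by rw [hsub, norm_smul, Real.norm_two]; ring
  have hnorm : ‖((f (x + δ) - f (x - δ)) / c) • δ‖ ≤ |2 * L / c| * ‖δ‖ ^ 2 :=
    calc _ = |f (x + δ) - f (x - δ)| / |c| * ‖δ‖ := by rw [norm_smul, Real.norm_eq_abs, abs_div]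
      _ ≤ |2 * L * ‖δ‖| / |c| * ‖δ‖ := by
        gcongr ?_ / _ * _; exact hdiff.trans (le_abs_self _)
      _ = |2 * L / c| * ‖δ‖ ^ 2 := by rw [abs_mul, abs_norm, abs_div]; ring
  calc _ ≤ (|2 * L / c| * ‖δ‖ ^ 2) ^ 2 := by gcongr
    _ = (2 * L / c) ^ 2 * ‖δ‖ ^ 4 := by rw [mul_pow, sq_abs]; ring

section Radial

variable {E : Type*} [NormedAddCommGroup E] [NormedSpace ℝ E] [MeasurableSpace E] [BorelSpace E]
  [FiniteDimensional ℝ E] [Nontrivial E] (μ : Measure E) [μ.IsAddHaarMeasure]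

theorem integral_norm_rpow_mul_exp_neg_mul_sq {b p : ℝ} (hb : 0 < b)
    (hp : -(finrank ℝ E : ℝ) < p) :
    ∫ x, ‖x‖ ^ p * exp (-b * ‖x‖ ^ 2) ∂μ = finrank ℝ E * μ.real (Metric.ball 0 1) *
      (b ^ (-(p + finrank ℝ E) / 2) * (1 / 2) * Gamma ((p + finrank ℝ E) / 2)) := by
  have hn : 1 ≤ finrank ℝ E := finrank_pos
  have hradial := integral_rpow_mul_exp_neg_mul_rpow two_pos
    (q := p + finrank ℝ E - 1) (by linarith) hb
  rw [sub_add_cancel] at hradial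
  rw [integral_fun_norm_addHaar μ (fun y => y ^ p * exp (-b * y ^ 2)), nsmul_eq_mul, smul_eq_mul,
    ← hradial, mul_assoc]
  congr 2
  refine setIntegral_congr_fun measurableSet_Ioi fun y (hy : 0 < y) => ?_
  rw [smul_eq_mul, rpow_sub_one hy.ne', rpow_add hy, ← rpow_natCast, Nat.cast_sub hn, Nat.cast_one,
    rpow_sub_one hy.ne', rpow_two]
  ring

theorem gamma_mul_integral_norm_rpow_mul_exp_neg_mul_sq {b p : ℝ} (hb : 0 < b)
    (hp : -(finrank ℝ E : ℝ) < p) :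
    Gamma (finrank ℝ E / 2) * ∫ x, ‖x‖ ^ p * exp (-b * ‖x‖ ^ 2) ∂μ =
      b ^ (-p / 2) * Gamma ((p + finrank ℝ E) / 2) * ∫ x, exp (-b * ‖x‖ ^ 2) ∂μ := by
  have h0 := integral_norm_rpow_mul_exp_neg_mul_sq μ hb (p := 0) (by simp [finrank_pos])
  simp only [rpow_zero, one_mul, zero_add] at h0
  rw [h0, integral_norm_rpow_mul_exp_neg_mul_sq μ hb hp, neg_add, add_div, rpow_add hb]
  ring

end Radial

theorem integral_gaussianMeasure_s14 (d : ℕ) (σ : ℝ) (g : EuclideanSpace ℝ (Fin d) → ℝ) :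
    ∫ δ, g δ ∂gaussianMeasure d σ =
      ∫ δ, (2 * π * σ ^ 2) ^ (-(d : ℝ) / 2) * exp (-‖δ‖ ^ 2 / (2 * σ ^ 2)) * g δ := by
  rw [gaussianMeasure, integral_withDensity_eq_integral_toReal_smul (by fun_prop)
    (.of_forall fun _ => ENNReal.ofReal_lt_top)]
  congr 1 with δ
  rw [ENNReal.toReal_ofReal (by positivity), smul_eq_mul]

theorem integral_norm_rpow_gaussianMeasure {d : ℕ} (hd : 0 < d) {σ : ℝ} (hσ : σ ≠ 0) {p : ℝ}
    (hp : -(d : ℝ) < p) :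
    ∫ δ, ‖δ‖ ^ p ∂gaussianMeasure d σ =
      (2 * σ ^ 2) ^ (p / 2) * Gamma ((p + d) / 2) / Gamma (d / 2) := by
  have hfinrank : finrank ℝ (EuclideanSpace ℝ (Fin d)) = d := by simp
  have : Nontrivial (EuclideanSpace ℝ (Fin d)) := nontrivial_of_finrank_pos (hfinrank ▸ hd)
  set b := (2 * σ ^ 2)⁻¹
  have hb : 0 < b := by positivity
  have hexp : ∀ δ : EuclideanSpace ℝ (Fin d), -‖δ‖ ^ 2 / (2 * σ ^ 2) = -b * ‖δ‖ ^ 2 := fun δ => by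
    ring
  have hratio := gamma_mul_integral_norm_rpow_mul_exp_neg_mul_sq
    (volume : Measure (EuclideanSpace ℝ (Fin d))) hb (p := p) (by rwa [hfinrank])
  rw [GaussianFourier.integral_rexp_neg_mul_sq_norm hb, hfinrank] at hratio
  have hΓ : 0 < Gamma (d / 2) := Gamma_pos_of_pos (by positivity)
  rw [integral_gaussianMeasure_s14, integral_congr_ae (.of_forall fun δ =>
    show _ = (2 * π * σ ^ 2) ^ (-(d : ℝ) / 2) * (‖δ‖ ^ p * exp (-b * ‖δ‖ ^ 2)) by rw [hexp]; ring),
    integral_const_mul, eq_div_iff hΓ.ne', mul_right_comm, mul_assoc, hratio]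
  have hπb : π / b = 2 * π * σ ^ 2 := by rw [div_inv_eq_mul]; ring
  have hbp : b ^ (-p / 2) = (2 * σ ^ 2) ^ (p / 2) := by
    rw [inv_rpow (by positivity), ← rpow_neg (by positivity), neg_div, neg_neg]
  have hnormalize : (2 * π * σ ^ 2) ^ (-(d : ℝ) / 2) * (2 * π * σ ^ 2) ^ ((d : ℝ) / 2) = 1 := by
    rw [neg_div, rpow_neg (by positivity), inv_mul_cancel₀ (by positivity)]
  rw [hπb, hbp]
  linear_combination (2 * σ ^ 2) ^ (p / 2) * Gamma ((p + d) / 2) * hnormalize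

theorem integral_norm_pow_four_gaussianMeasure {d : ℕ} (hd : 0 < d) {σ : ℝ} (hσ : σ ≠ 0) :
    ∫ δ, ‖δ‖ ^ 4 ∂gaussianMeasure d σ = σ ^ 4 * d * (d + 2) := by
  have hd' : (0 : ℝ) < d := by exact_mod_cast hd
  have hΓ : Gamma ((4 + d) / 2) = (d / 2 + 1) * (d / 2) * Gamma (d / 2) := by
    rw [show ((4 : ℝ) + d) / 2 = d / 2 + 1 + 1 by ring, Gamma_add_one (by positivity),
      Gamma_add_one (by positivity), mul_assoc]
  have h := integral_norm_rpow_gaussianMeasure hd hσ (p := 4) (by linarith)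
  simp only [rpow_ofNat] at h
  rw [h, hΓ, show (4 : ℝ) / 2 = (2 : ℕ) by norm_num, rpow_natCast]
  field_simp [(Gamma_pos_of_pos (half_pos hd')).ne']

theorem antithetic_gradient_estimator_second_moment (d : ℕ) (hd : 0 < d)
    (σ : ℝ) (hσ : 0 < σ)
    (f : EuclideanSpace ℝ (Fin d) → ℝ)
    (L : ℝ) (hf : ∀ x y, |f x - f y| ≤ L * ‖x - y‖) :
    ∀ x, (∫ δ, ‖((f (x + δ) - f (x - δ)) / (2 * σ ^ 2)) • δ‖ ^ 2 ∂(gaussianMeasure d σ)) ≤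
      L ^ 2 * d * (d + 2) := by
  intro x
  have hmoment := integral_norm_pow_four_gaussianMeasure hd hσ.ne'
  have hd' : (0 : ℝ) < d := by exact_mod_cast hd
  have hint : Integrable (fun δ => ‖δ‖ ^ 4) (gaussianMeasure d σ) :=
    .of_integral_ne_zero (by rw [hmoment]; positivity)
  calc _ ≤ ∫ δ, (2 * L / (2 * σ ^ 2)) ^ 2 * ‖δ‖ ^ 4 ∂gaussianMeasure d σ :=
        integral_mono_of_nonneg (.of_forall fun _ => by positivity) (hint.const_mul _)
          (.of_forall (norm_antithetic_smul_sq_le hf _ x))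
    _ = L ^ 2 * d * (d + 2) := by
      rw [integral_const_mul, hmoment]
      field_simp
end
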